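/- For every integer d ≥ 1, the d-dimensional hypercube graph Q_d has congestion at most 1/2: it admits a routing whose flow through every ordered pair of adjacent vertices is at most 2^{d−1} = (1/2)·|{0,1}^d|. -/

import Mathlib

open Set Pointwise

noncomputable section

open scoped Classical in
/-- The number of times a walk traverses the vertex `u` immediately followed by `v`. -/
noncomputable def dartCount {V : Type*} {G : SimpleGraph V} {s t : V}
    (p : G.Walk s t) (u v : V) : ℕ :=
  (p.darts.filter (fun dr => dr.toProd = (u, v))).length

/-- A routing of a graph `G`: for each ordered pair `(s,t)` of distinct vertices, a
finitely supported weight function with nonnegative values summing to `1` on the walks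
from `s` to `t`. -/
def IsRouting {V : Type*} (G : SimpleGraph V)
    (w : ∀ s t : V, G.Walk s t → ℝ) : Prop :=
  ∀ s t : V, s ≠ t →
    (∀ p, 0 ≤ w s t p) ∧ {p | w s t p ≠ 0}.Finite ∧ ∑ᶠ p, w s t p = 1

/-- The flow of a routing through an ordered pair `(u,v)`: the sum over all ordered pairs
`(s,t)` of distinct vertices and all walks `p` from `s` to `t` of the weight of `p` times
the number of times `p` traverses `u` immediately followed by `v`. -/
noncomputable def routingFlow {V : Type*} (G : SimpleGraph V)
    (w : ∀ s t : V, G.Walk s t → ℝ) (u v : V) : ℝ :=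
  ∑ᶠ s, ∑ᶠ t, ∑ᶠ _ : s ≠ t, ∑ᶠ p : G.Walk s t, w s t p * (dartCount p u v : ℝ)

/-- The `d`-dimensional hypercube graph on vertex set `{0,1}^d`: two vertices are adjacent
exactly when they differ in exactly one coordinate. -/
def cubeGraph (d : ℕ) : SimpleGraph (Fin d → Bool) where
  Adj x y := {i | x i ≠ y i}.ncard = 1
  symm := by
    constructor
    intro x y h
    have hxy : {i | y i ≠ x i} = {i | x i ≠ y i} := by ext i; simp [ne_comm]
    simpa [hxy] using h
  loopless := by constructor; intro x h; simp at h

/-!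
Route every pair `(s, t)` along the bit-fixing walk, which flips the coordinates where `s` and
`t` differ in increasing order; it never uses a dart twice. Just before flipping coordinate `i`
it stands at the vertex that agrees with `t` below `i` and with `s` from `i` on. So if it uses
the dart from `u` to `u` with coordinate `i` flipped, then `s` agrees with `u` from `i` on, `t`
agrees with `u` below `i`, and `t i ≠ u i`. Such a pair is determined by the vertex agreeing
with `s` below `i` and with `t` from `i` on, whose `i`-th coordinate is `!u i`; hence at most
`2 ^ (d - 1)` routes use the dart.
-/

open Finset SimpleGraph

section Routing

variable {V : Type*} {G : SimpleGraph V}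

open scoped Classical in
def walkRouting (r : ∀ s t : V, G.Walk s t) : ∀ s t : V, G.Walk s t → ℝ :=
  fun s t p => if p = r s t then 1 else 0

theorem finsum_walkRouting_mul (r : ∀ s t : V, G.Walk s t) (s t : V) (f : G.Walk s t → ℝ) :
    ∑ᶠ p, walkRouting r s t p * f p = f (r s t) := by
  rw [finsum_eq_single _ (r s t) fun p hp => by simp [walkRouting, hp]]
  simp [walkRouting]

theorem isRouting_walkRouting (r : ∀ s t : V, G.Walk s t) : IsRouting G (walkRouting r) := by
  intro s t _
  refine ⟨fun p => by unfold walkRouting; split_ifs <;> norm_num, ?_, ?_⟩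
  · refine (Set.finite_singleton (r s t)).subset fun p hp => ?_
    by_contra h
    exact hp (if_neg h)
  · simpa using finsum_walkRouting_mul r s t 1

theorem routingFlow_walkRouting [Fintype V] [DecidableEq V] (r : ∀ s t : V, G.Walk s t)
    (u v : V) :
    routingFlow G (walkRouting r) u v =
      ∑ s, ∑ t, if s ≠ t then (dartCount (r s t) u v : ℝ) else 0 := by
  simp only [routingFlow, finsum_walkRouting_mul, finsum_eq_if, finsum_eq_sum_of_fintype]

theorem dartCount_eq_count [DecidableEq V] {s t : V} (p : G.Walk s t) (u v : V) :
    dartCount p u v = (p.darts.map Dart.toProd).count (u, v) := by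
  simp only [dartCount, List.count_eq_length_filter, List.filter_map, List.length_map]
  congr 1
  exact List.filter_congr fun _ _ => by simp only [Function.comp_apply, beq_eq_decide]; congr 1

theorem dartCount_le_of_nodup [DecidableEq V] {s t : V} {p : G.Walk s t} (hp : p.darts.Nodup)
    (u v : V) :
    dartCount p u v ≤ if (u, v) ∈ p.darts.map Dart.toProd then 1 else 0 := by
  rw [dartCount_eq_count]
  split_ifs with h
  · exact List.nodup_iff_count_le_one.mp (hp.map Dart.toProd_injective) _
  · exact (List.count_eq_zero.mpr h).le

theorem routingFlow_walkRouting_le [Fintype V] (r : ∀ s t : V, G.Walk s t)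
    (hr : ∀ s t, (r s t).darts.Nodup) (u v : V) :
    routingFlow G (walkRouting r) u v ≤
      {p : V × V | (u, v) ∈ (r p.1 p.2).darts.map Dart.toProd}.ncard := by
  classical
  calc routingFlow G (walkRouting r) u v
      = ∑ s, ∑ t, if s ≠ t then (dartCount (r s t) u v : ℝ) else 0 :=
        routingFlow_walkRouting r u v
    _ ≤ ∑ s, ∑ t, if (u, v) ∈ (r s t).darts.map Dart.toProd then (1 : ℝ) else 0 := by
      gcongr with s _ t _
      calc (if s ≠ t then (dartCount (r s t) u v : ℝ) else 0)
          ≤ dartCount (r s t) u v := by split_ifs <;> simp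
        _ ≤ _ := by exact_mod_cast dartCount_le_of_nodup (hr s t) u v
    _ = {p : V × V | (u, v) ∈ (r p.1 p.2).darts.map Dart.toProd}.ncard := by
      rw [← Fintype.sum_prod_type', sum_boole, Set.ncard_eq_toFinset_card', Set.toFinset_ofPred]

end Routing

namespace cubeGraph

variable {d : ℕ}

def flipAt (i : Fin d) (x : Fin d → Bool) : Fin d → Bool :=
  Function.update x i (!x i)

theorem adj_flipAt (i : Fin d) (x : Fin d → Bool) : (cubeGraph d).Adj x (flipAt i x) := by
  show {j | x j ≠ flipAt i x j}.ncard = 1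
  rw [Set.ncard_eq_one]
  refine ⟨i, Set.ext fun j => ?_⟩
  by_cases h : j = i <;> simp [flipAt, h]

theorem exists_eq_flipAt_of_adj {x y : Fin d → Bool} (h : (cubeGraph d).Adj x y) :
    ∃ i, y = flipAt i x := by
  obtain ⟨i, hi⟩ := Set.ncard_eq_one.mp h
  refine ⟨i, funext fun j => ?_⟩
  have hj := Set.ext_iff.mp hi j
  by_cases h : j = i
  · subst h
    simpa [flipAt, Bool.eq_not_iff, eq_comm] using hj
  · simpa [flipAt, h, eq_comm] using hj

theorem flipAt_left_injective (x : Fin d → Bool) : Function.Injective fun i => flipAt i x := by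
  intro i j h
  by_contra hij
  have := congrFun h i
  simp [flipAt, hij] at this

def flips : List (Fin d) → (Fin d → Bool) → Fin d → Bool
  | [], x => x
  | i :: L, x => flips L (flipAt i x)

def flipWalk : (L : List (Fin d)) → (x : Fin d → Bool) → (cubeGraph d).Walk x (flips L x)
  | [], _ => .nil
  | i :: L, x => .cons (adj_flipAt i x) (flipWalk L (flipAt i x))

theorem flips_apply {L : List (Fin d)} (hL : L.Nodup) (x : Fin d → Bool) (j : Fin d) :
    flips L x j = if j ∈ L then !x j else x j := by
  induction L generalizing x with
  | nil => rfl
  | cons i L ih =>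
    obtain ⟨hiL, hL⟩ := List.nodup_cons.mp hL
    rw [flips, ih hL]
    by_cases hj : j = i
    · subst hj
      simp [flipAt, hiL]
    · simp [flipAt, hj]

theorem exists_eq_append_of_mem_darts_flipWalk {L : List (Fin d)} {x a b : Fin d → Bool}
    (h : (a, b) ∈ (flipWalk L x).darts.map Dart.toProd) :
    ∃ L₁ i L₂, L = L₁ ++ i :: L₂ ∧ a = flips L₁ x ∧ b = flipAt i a := by
  induction L generalizing x with
  | nil => exact absurd h List.not_mem_nil
  | cons j L ih =>
    change (a, b) ∈ (x, flipAt j x) :: (flipWalk L (flipAt j x)).darts.map Dart.toProd at h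
    rcases List.mem_cons.mp h with h | h
    · obtain ⟨rfl, rfl⟩ := Prod.mk.inj h
      exact ⟨[], j, L, rfl, rfl, rfl⟩
    · obtain ⟨L₁, i, L₂, rfl, ha, hb⟩ := ih h
      exact ⟨j :: L₁, i, L₂, rfl, ha, hb⟩

theorem darts_flipWalk_nodup {L : List (Fin d)} (hL : L.Nodup) (x : Fin d → Bool) :
    (flipWalk L x).darts.Nodup := by
  induction L generalizing x with
  | nil => exact List.nodup_nil
  | cons i L ih =>
    obtain ⟨hiL, hL⟩ := List.nodup_cons.mp hL
    refine List.nodup_cons.mpr ⟨fun hmem => hiL ?_, ih hL _⟩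
    obtain ⟨L₁, j, L₂, rfl, -, hj⟩ :=
      exists_eq_append_of_mem_darts_flipWalk (List.mem_map_of_mem (f := Dart.toProd) hmem)
    rw [flipAt_left_injective _ hj]
    simp

def diffList (s t : Fin d → Bool) : List (Fin d) :=
  (List.finRange d).filter fun j => s j ≠ t j

theorem mem_diffList {s t : Fin d → Bool} {j : Fin d} : j ∈ diffList s t ↔ s j ≠ t j := by
  simp [diffList]

theorem nodup_diffList (s t : Fin d → Bool) : (diffList s t).Nodup :=
  (List.nodup_finRange d).filter _

theorem pairwise_lt_diffList (s t : Fin d → Bool) : (diffList s t).Pairwise (· < ·) :=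
  (List.pairwise_lt_finRange d).filter _

theorem flips_diffList (s t : Fin d → Bool) : flips (diffList s t) s = t := by
  funext j
  simp only [flips_apply (nodup_diffList s t), mem_diffList]
  cases s j <;> cases t j <;> simp

def bitFixingWalk (s t : Fin d → Bool) : (cubeGraph d).Walk s t :=
  (flipWalk (diffList s t) s).copy rfl (flips_diffList s t)

theorem darts_bitFixingWalk_nodup (s t : Fin d → Bool) : (bitFixingWalk s t).darts.Nodup := by
  simpa [bitFixingWalk] using darts_flipWalk_nodup (nodup_diffList s t) s

def mix (i : Fin d) (s t : Fin d → Bool) : Fin d → Bool :=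
  fun j => if j < i then t j else s j

theorem flips_eq_mix_of_diffList_eq {s t : Fin d → Bool} {L₁ L₂ : List (Fin d)} {i : Fin d}
    (h : diffList s t = L₁ ++ i :: L₂) : flips L₁ s = mix i s t ∧ s i ≠ t i := by
  have hsorted := pairwise_lt_diffList s t
  rw [h, List.pairwise_append, List.pairwise_cons] at hsorted
  have hmem : ∀ j, j ∈ L₁ ↔ j < i ∧ s j ≠ t j := by
    intro j
    rw [← mem_diffList, h]
    constructor
    · intro hj
      exact ⟨hsorted.2.2 j hj i List.mem_cons_self, List.mem_append_left _ hj⟩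
    · rintro ⟨hji, hj⟩
      rcases List.mem_append.mp hj with hj | hj
      · exact hj
      · rcases List.mem_cons.mp hj with rfl | hj
        · exact absurd hji (lt_irrefl j)
        · exact absurd (hsorted.2.1.1 j hj) (not_lt.mpr hji.le)
  have hL₁ : L₁.Nodup := (List.nodup_append.mp (h ▸ nodup_diffList s t)).1
  refine ⟨funext fun j => ?_, mem_diffList.mp (by simp [h])⟩
  simp only [flips_apply hL₁, hmem, mix]
  by_cases hji : j < i <;> cases s j <;> cases t j <;> simp [hji]

theorem mix_of_mem_darts_bitFixingWalk {s t u : Fin d → Bool} {i : Fin d}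
    (h : (u, flipAt i u) ∈ (bitFixingWalk s t).darts.map Dart.toProd) :
    u = mix i s t ∧ s i ≠ t i := by
  rw [bitFixingWalk, Walk.darts_copy] at h
  obtain ⟨L₁, j, L₂, hL, rfl, hj⟩ := exists_eq_append_of_mem_darts_flipWalk h
  rw [← flipAt_left_injective _ hj] at hL
  exact flips_eq_mix_of_diffList_eq hL

theorem injOn_mix_swap (u : Fin d → Bool) (i : Fin d) :
    Set.InjOn (fun p : (Fin d → Bool) × (Fin d → Bool) => mix i p.2 p.1)
      {p | u = mix i p.1 p.2} := by
  intro p hp q hq h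
  ext j
  all_goals
    have hpj := congrFun hp j
    have hqj := congrFun hq j
    have hj := congrFun h j
    by_cases hji : j < i <;> simp_all [mix]

theorem ncard_mix_eq_le (u : Fin d → Bool) (i : Fin d) :
    {p : (Fin d → Bool) × (Fin d → Bool) | u = mix i p.1 p.2 ∧ p.1 i ≠ p.2 i}.ncard ≤
      2 ^ (d - 1) := by
  classical
  calc _ ≤ {x : Fin d → Bool | x i = !u i}.ncard := by
        refine Set.ncard_le_ncard_of_injOn _ ?_
          ((injOn_mix_swap u i).mono fun p hp => hp.1) (Set.toFinite _)
        rintro ⟨s, t⟩ ⟨rfl, hst⟩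
        simpa [mix, Bool.eq_not_iff, eq_comm] using hst
    _ = 2 ^ (d - 1) := by
        rw [Set.ncard_eq_toFinset_card', Set.toFinset_ofPred]
        have := Fintype.card_filter_piFinset_const_eq_of_mem univ i (mem_univ (!u i))
        rwa [Fintype.piFinset_univ, card_univ, Fintype.card_bool, Fintype.card_fin] at this

end cubeGraph

open cubeGraph in
theorem cubeGraph_congestion (d : ℕ) :
    ∃ w : ∀ s t : Fin d → Bool, (cubeGraph d).Walk s t → ℝ,
      IsRouting (cubeGraph d) w ∧
      ∀ u v : Fin d → Bool, (cubeGraph d).Adj u v →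
        routingFlow (cubeGraph d) w u v ≤
          (1/2 : ℝ) * Fintype.card (Fin d → Bool) := by
  refine ⟨walkRouting bitFixingWalk, isRouting_walkRouting _, fun u v huv => ?_⟩
  obtain ⟨i, rfl⟩ := exists_eq_flipAt_of_adj huv
  calc routingFlow (cubeGraph d) (walkRouting bitFixingWalk) u (flipAt i u)
      ≤ {p : (Fin d → Bool) × (Fin d → Bool) |
          (u, flipAt i u) ∈ (bitFixingWalk p.1 p.2).darts.map Dart.toProd}.ncard :=
        routingFlow_walkRouting_le _ darts_bitFixingWalk_nodup _ _
    _ ≤ {p : (Fin d → Bool) × (Fin d → Bool) |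
          u = mix i p.1 p.2 ∧ p.1 i ≠ p.2 i}.ncard := by
        gcongr
        · exact Set.toFinite _
        · exact mix_of_mem_darts_bitFixingWalk
    _ ≤ (2 ^ (d - 1) : ℕ) := by exact_mod_cast ncard_mix_eq_le u i
    _ = (1/2 : ℝ) * Fintype.card (Fin d → Bool) := by
        rw [Fintype.card_fun, Fintype.card_bool, Fintype.card_fin,
          ← Nat.sub_one_add_one i.pos.ne']
        push_cast
        ring
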